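/- Let δ ∈ ℕ and suppose G is δ-hyperbolic with respect to A and μ. Then the pair (G, L_geod) satisfies Property BP_ν for the function ν(k) = k + 2δ. Explicitly: if H, K ≤ G are L_geod-quasi-convex subgroups with common constant k, n ≥ 1, and g₁, …, g_n ∈ G are such that the subsets K, g₁H, …, g_nH of G are pairwise distinct and K ∩ g₁Hg₁⁻¹ ∩ … ∩ g_nHg_n⁻¹ is infinite, then there exists z ∈ G such that some element of K and some element of each coset g_iH lie at word-metric distance at most k + 2δ from z. -/

import Mathlib

open List

/-- A word over the alphabet Ã = A ∪ A⁻¹ is a `List (A × Bool)`: the letter `(a, true)`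
stands for `a` and `(a, false)` for the formal inverse `a⁻¹`. A word is *reduced* if it
has no factor `a·a⁻¹` or `a⁻¹·a`. -/
def Reduced {A : Type*} (w : List (A × Bool)) : Prop :=
  w.Chain' fun p q => ¬(p.1 = q.1 ∧ q.2 = !p.2)

variable {A : Type*} [Fintype A] {G : Type*} [Group G]

/-- Evaluation in `G` of a word over Ã, determined by the images `f a` of the letters.
This is the (inverse-respecting) monoid homomorphism μ : Ã* → G. -/
def eval (f : A → G) (w : List (A × Bool)) : G :=
  (w.map fun p => if p.2 then f p.1 else (f p.1)⁻¹).prod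

/-- Word length of `g ∈ G` with respect to the generators `A`:
the least length of a word over Ã mapping onto `g`. -/
noncomputable def wlen (f : A → G) (g : G) : ℕ :=
  sInf {n | ∃ w : List (A × Bool), eval f w = g ∧ w.length = n}

/-- A rational structure: `L` is a regular language of reduced words with μ(L) = G. -/
def RationalStructure (f : A → G) (L : Set (List (A × Bool))) : Prop :=
  Language.IsRegular (L : Language (A × Bool)) ∧ (∀ w ∈ L, Reduced w) ∧
    ∀ g : G, ∃ w ∈ L, eval f w = g

/-- `H` is L-quasi-convex with constant `k`: for every `w ∈ L` with `μ(w) ∈ H` and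
every prefix `u` of `w`, there is `h ∈ H` with `|h⁻¹ μ(u)| ≤ k`. -/
def QCW (f : A → G) (L : Set (List (A × Bool))) (H : Subgroup G) (k : ℕ) : Prop :=
  ∀ w ∈ L, eval f w ∈ H → ∀ u, u <+: w → ∃ h ∈ H, wlen f (h⁻¹ * eval f u) ≤ k

/-- The set of right cosets `H·μ(u)` where `u` ranges over prefixes of words
`w ∈ L` with `μ(w) ∈ H` (the vertex set of the Stallings graph Γ_L(H)). -/
def VL (f : A → G) (L : Set (List (A × Bool))) (H : Subgroup G) : Set (Set G) :=
  {S | ∃ w ∈ L, eval f w ∈ H ∧ ∃ u, u <+: w ∧ S = {x | ∃ h ∈ H, x = h * eval f u}}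

/-- The language of geodesic words: reduced words whose length equals the
word length of their image in G. -/
def Lgeod (f : A → G) : Set (List (A × Bool)) :=
  {w | Reduced w ∧ w.length = wlen f (eval f w)}

/-- The left coset g·H as a subset of G. -/
def lcoset (g : G) (H : Subgroup G) : Set G := {x | ∃ h ∈ H, x = g * h}

/-- The right coset H·g as a subset of G. -/
def rcoset (H : Subgroup G) (g : G) : Set G := {x | ∃ h ∈ H, x = h * g}

/-- The conjugate subgroup H^g = g⁻¹Hg. -/
def conjG {G : Type*} [Group G] (H : Subgroup G) (g : G) : Subgroup G :=
  Subgroup.map ((MulAut.conj g⁻¹).toMonoidHom) H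

/-- The double coset H·g·K as a subset of G. -/
def dcoset (H : Subgroup G) (g : G) (K : Subgroup G) : Set G :=
  {x | ∃ h ∈ H, ∃ k ∈ K, x = h * g * k}

/-- Property BP_ν: whenever H, K are L-quasi-convex subgroups with common constant k,
and K, g₁H, …, g_nH are pairwise distinct subsets of G such that
K ∩ g₁Hg₁⁻¹ ∩ … ∩ g_nHg_n⁻¹ is infinite, there exists z ∈ G such that the ball of
center z and radius ν(k) (in the word metric) meets K and each coset g_iH. -/
def BP (f : A → G) (L : Set (List (A × Bool))) (ν : ℕ → ℕ) : Prop :=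
  ∀ (H K : Subgroup G) (k : ℕ), QCW f L H k → QCW f L K k →
    ∀ n : ℕ, 1 ≤ n → ∀ g : Fin n → G,
      Function.Injective
        (Fin.cons (K : Set G) (fun i => lcoset (g i) H) : Fin (n + 1) → Set G) →
      (((K ⊓ ⨅ i, conjG H (g i)⁻¹ : Subgroup G) : Set G)).Infinite →
      ∃ z : G, (∃ w ∈ K, wlen f (z⁻¹ * w) ≤ ν k) ∧
        ∀ i, ∃ w ∈ lcoset (g i) H, wlen f (z⁻¹ * w) ≤ ν k

/-- G is δ-hyperbolic with respect to A and μ: for all g, h, k ∈ G and all geodesic words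
u, v, w with μ(u) = g⁻¹h, μ(v) = g⁻¹k, μ(w) = h⁻¹k, every prefix of the geodesic from g
to h lies within distance δ of the union of the two other geodesic sides. -/
def Hyperbolic (f : A → G) (δ : ℕ) : Prop :=
  ∀ g h k : G, ∀ u v w : List (A × Bool),
    u ∈ Lgeod f → v ∈ Lgeod f → w ∈ Lgeod f →
    eval f u = g⁻¹ * h → eval f v = g⁻¹ * k → eval f w = h⁻¹ * k →
    ∀ u', u' <+: u →
      ((∃ v', v' <+: v ∧ wlen f ((g * eval f u')⁻¹ * (g * eval f v')) ≤ δ) ∨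
       (∃ w', w' <+: w ∧ wlen f ((g * eval f u')⁻¹ * (h * eval f w')) ≤ δ))

/-!
Take `x` in the infinite subgroup `K ∩ ⋂ gᵢHgᵢ⁻¹` much longer than every `gᵢ`, and let `z` be
a point on a geodesic from `1` to `x`, far from both ends. Quasi-convexity of `K` puts `z`
within `k` of `K`. For each `i`, the geodesic quadrilateral `1, x, x·gᵢ, gᵢ` has two short sides
`[x, x·gᵢ]` and `[1, gᵢ]`; two applications of `δ`-thinness carry `z` first to a point `p` of
`[1, x·gᵢ]` and then to a point of `[x·gᵢ, gᵢ]`. The latter is a translate by `x·gᵢ ∈ gᵢH` of a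
geodesic representing an element of `H`, so quasi-convexity of `H` puts it within `k` of `gᵢH`.
-/

section WordMetric

omit [Fintype A]

variable (f : A → G)

lemma eval_append (u v : List (A × Bool)) : eval f (u ++ v) = eval f u * eval f v := by
  simp [eval]

def invWord (w : List (A × Bool)) : List (A × Bool) :=
  (w.map fun p => (p.1, !p.2)).reverse

lemma length_invWord (w : List (A × Bool)) : (invWord w).length = w.length := by
  simp [invWord]

lemma eval_invWord (w : List (A × Bool)) : eval f (invWord w) = (eval f w)⁻¹ := by
  induction w with
  | nil => simp [invWord, eval]
  | cons p t ih =>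
    rw [show invWord (p :: t) = invWord t ++ [(p.1, !p.2)] by simp [invWord], eval_append, ih]
    obtain ⟨a, b⟩ := p
    cases b <;> simp [eval]

/-- `wlen f` takes the junk value `0` outside this subgroup. -/
def evalRange : Subgroup G where
  carrier := Set.range (eval f)
  one_mem' := ⟨[], rfl⟩
  mul_mem' := by
    rintro _ _ ⟨u, rfl⟩ ⟨v, rfl⟩
    exact ⟨u ++ v, eval_append f u v⟩
  inv_mem' := by
    rintro _ ⟨u, rfl⟩
    exact ⟨invWord u, eval_invWord f u⟩

@[simp]
lemma eval_mem_evalRange (w : List (A × Bool)) : eval f w ∈ evalRange f := ⟨w, rfl⟩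

lemma wlen_le_length {g : G} {w : List (A × Bool)} (h : eval f w = g) : wlen f g ≤ w.length :=
  Nat.sInf_le ⟨w, h, rfl⟩

lemma wlen_eq_zero_of_not_mem {g : G} (h : g ∉ evalRange f) : wlen f g = 0 := by
  rw [wlen, Nat.sInf_eq_zero]
  refine Or.inr (Set.eq_empty_of_forall_notMem fun n hn => ?_)
  obtain ⟨w, hw, -⟩ := hn
  exact h ⟨w, hw⟩

lemma exists_eval_eq_length_eq_wlen {g : G} (h : g ∈ evalRange f) :
    ∃ w, eval f w = g ∧ w.length = wlen f g := by
  obtain ⟨w, hw⟩ := h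
  exact Nat.sInf_mem (s := {n | ∃ w, eval f w = g ∧ w.length = n}) ⟨w.length, w, hw, rfl⟩

lemma eval_append_cons_cons_of_cancel (l₁ l₂ : List (A × Bool)) {p q : A × Bool}
    (h : p.1 = q.1 ∧ q.2 = !p.2) :
    eval f (l₁ ++ p :: q :: l₂) = eval f (l₁ ++ l₂) := by
  obtain ⟨a, b⟩ := p
  obtain ⟨c, d⟩ := q
  obtain ⟨rfl, rfl⟩ := h
  cases b <;> simp [eval]

/-- A shortest word is reduced, since cancelling a factor `a·a⁻¹` would shorten it. -/
lemma exists_mem_Lgeod {g : G} (h : g ∈ evalRange f) :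
    ∃ u ∈ Lgeod f, eval f u = g ∧ u.length = wlen f g := by
  obtain ⟨w, hw, hlen⟩ := exists_eval_eq_length_eq_wlen f h
  refine ⟨w, ⟨?_, by rw [hw, hlen]⟩, hw, hlen⟩
  refine List.isChain_iff_forall_rel_of_append_cons_cons.mpr fun p q l₁ l₂ hsplit hpq => ?_
  have hshort := wlen_le_length f (show eval f (l₁ ++ l₂) = g by
    rw [← eval_append_cons_cons_of_cancel f l₁ l₂ hpq, ← hsplit, hw])
  rw [← hlen, hsplit] at hshort
  simp at hshort

lemma wlen_inv (g : G) : wlen f g⁻¹ = wlen f g := by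
  suffices key : ∀ x : G, wlen f x⁻¹ ≤ wlen f x from le_antisymm (key g) (by simpa using key g⁻¹)
  intro x
  by_cases hx : x ∈ evalRange f
  · obtain ⟨w, hw, hlen⟩ := exists_eval_eq_length_eq_wlen f hx
    rw [← hlen, ← length_invWord]
    exact wlen_le_length f (by rw [eval_invWord, hw])
  · rw [wlen_eq_zero_of_not_mem f (by simpa using hx)]
    exact Nat.zero_le _

lemma wlen_inv_mul_comm (a b : G) : wlen f (a⁻¹ * b) = wlen f (b⁻¹ * a) := by
  rw [← wlen_inv, mul_inv_rev, inv_inv]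

lemma wlen_mul_le {a : G} (ha : a ∈ evalRange f) (b : G) :
    wlen f (a * b) ≤ wlen f a + wlen f b := by
  by_cases hb : b ∈ evalRange f
  · obtain ⟨u, hu, hul⟩ := exists_eval_eq_length_eq_wlen f ha
    obtain ⟨v, hv, hvl⟩ := exists_eval_eq_length_eq_wlen f hb
    rw [← hul, ← hvl, ← List.length_append]
    exact wlen_le_length f (by rw [eval_append, hu, hv])
  · rw [wlen_eq_zero_of_not_mem f fun hab => hb (by simpa using mul_mem (inv_mem ha) hab)]
    exact Nat.zero_le _

lemma wlen_le_add_wlen_inv_mul {b : G} (hb : b ∈ evalRange f) (a : G) :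
    wlen f a ≤ wlen f b + wlen f (a⁻¹ * b) := by
  have := wlen_mul_le f hb (b⁻¹ * a)
  rwa [mul_inv_cancel_left, ← wlen_inv_mul_comm] at this

lemma wlen_eval_of_append_mem_Lgeod {u t : List (A × Bool)} (h : u ++ t ∈ Lgeod f) :
    wlen f (eval f u) = u.length ∧ wlen f (eval f t) = t.length := by
  have hu := wlen_le_length f (rfl : eval f u = _)
  have ht := wlen_le_length f (rfl : eval f t = _)
  have hsum := wlen_mul_le f (eval_mem_evalRange f u) (eval f t)
  rw [← eval_append, ← h.2, List.length_append] at hsum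
  omega

lemma wlen_eval_of_prefix {u u' : List (A × Bool)} (hu : u ∈ Lgeod f) (hu' : u' <+: u) :
    wlen f (eval f u') = u'.length := by
  obtain ⟨t, rfl⟩ := hu'
  exact (wlen_eval_of_append_mem_Lgeod f hu).1

lemma finite_setOf_mem_evalRange_wlen_le [Finite A] (n : ℕ) :
    {g | g ∈ evalRange f ∧ wlen f g ≤ n}.Finite := by
  refine ((List.finite_length_le (A × Bool) n).image (eval f)).subset ?_
  rintro g ⟨hg, hle⟩
  obtain ⟨w, hw, hlen⟩ := exists_eval_eq_length_eq_wlen f hg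
  exact ⟨w, by simpa [hlen] using hle, hw⟩

end WordMetric

section Hyperbolic

omit [Fintype A]

variable {f : A → G} {δ : ℕ}

lemma Hyperbolic.thin_of_prefix (hδ : Hyperbolic f δ) {u v w u' : List (A × Bool)}
    (hu : u ∈ Lgeod f) (hv : v ∈ Lgeod f) (hw : w ∈ Lgeod f)
    (hw_eval : eval f w = (eval f u)⁻¹ * eval f v) (hu' : u' <+: u) :
    (∃ v', v' <+: v ∧ wlen f ((eval f u')⁻¹ * eval f v') ≤ δ) ∨
      ∃ w', w' <+: w ∧ wlen f ((eval f u')⁻¹ * (eval f u * eval f w')) ≤ δ := by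
  simpa using hδ 1 (eval f u) (eval f v) u v w hu hv hw (by simp) (by simp) hw_eval u' hu'

/-- A point of the side `[1, x]` that is far from `x` is close to the side `[1, y]`. -/
lemma Hyperbolic.exists_near_prefix_of_far_from_end (hδ : Hyperbolic f δ)
    {u v u' : List (A × Bool)} (hu : u ∈ Lgeod f) (hv : v ∈ Lgeod f) (hu' : u' <+: u)
    (hfar : wlen f ((eval f u)⁻¹ * eval f v) + δ < wlen f ((eval f u')⁻¹ * eval f u)) :
    ∃ v', v' <+: v ∧ wlen f ((eval f u')⁻¹ * eval f v') ≤ δ := by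
  obtain ⟨w, hw, hw_eval, hw_len⟩ := exists_mem_Lgeod f (g := (eval f u)⁻¹ * eval f v)
    (by apply_rules [mul_mem, inv_mem, eval_mem_evalRange])
  refine (hδ.thin_of_prefix hu hv hw hw_eval hu').resolve_right ?_
  rintro ⟨w', hw', hclose⟩
  have hw'_len : wlen f (eval f w') ≤ w.length :=
    (wlen_le_length f rfl).trans hw'.length_le
  have := wlen_le_add_wlen_inv_mul f (b := (eval f u')⁻¹ * (eval f u * eval f w'))
    (by apply_rules [mul_mem, inv_mem, eval_mem_evalRange]) ((eval f u')⁻¹ * eval f u)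
  rw [show ((eval f u')⁻¹ * eval f u)⁻¹ * ((eval f u')⁻¹ * (eval f u * eval f w')) =
    eval f w' by group] at this
  omega

/-- A point of the side `[1, x]` that is far from `1` is close to the side `[x, y]`. -/
lemma Hyperbolic.exists_near_translate_prefix_of_far_from_start (hδ : Hyperbolic f δ)
    {u v w u' : List (A × Bool)} (hu : u ∈ Lgeod f) (hv : v ∈ Lgeod f) (hw : w ∈ Lgeod f)
    (hw_eval : eval f w = (eval f u)⁻¹ * eval f v) (hu' : u' <+: u)
    (hfar : wlen f (eval f v) + δ < u'.length) :
    ∃ w', w' <+: w ∧ wlen f ((eval f u')⁻¹ * (eval f u * eval f w')) ≤ δ := by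
  refine (hδ.thin_of_prefix hu hv hw hw_eval hu').resolve_left ?_
  rintro ⟨v', hv', hclose⟩
  have hv'_len : wlen f (eval f v') ≤ wlen f (eval f v) := by
    rw [wlen_eval_of_prefix f hv hv', ← hv.2]
    exact hv'.length_le
  have := wlen_le_add_wlen_inv_mul f (eval_mem_evalRange f v') (eval f u')
  rw [wlen_eval_of_prefix f hu hu'] at this
  omega

lemma exists_mem_lcoset_wlen_eq_zero {z g : G} (hz : z ∈ evalRange f) (hg : g ∉ evalRange f)
    (H : Subgroup G) : ∃ y ∈ lcoset g H, wlen f (z⁻¹ * y) = 0 :=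
  ⟨g, ⟨1, one_mem H, (mul_one g).symm⟩,
    wlen_eq_zero_of_not_mem f fun h => hg (by simpa using mul_mem hz h)⟩

lemma Hyperbolic.exists_mem_lcoset_near (hδ : Hyperbolic f δ) {H : Subgroup G} {k : ℕ}
    (hH : QCW f (Lgeod f) H k) {u u' : List (A × Bool)} (hu : u ∈ Lgeod f) (hu' : u' <+: u)
    {g : G} (hg : g⁻¹ * eval f u * g ∈ H) (h_start : wlen f g + 2 * δ < u'.length)
    (h_end : wlen f g + δ < u.length - u'.length) :
    ∃ y ∈ lcoset g H, wlen f ((eval f u')⁻¹ * y) ≤ k + 2 * δ := by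
  by_cases hgR : g ∉ evalRange f
  · obtain ⟨y, hy, hy0⟩ := exists_mem_lcoset_wlen_eq_zero (eval_mem_evalRange f u') hgR H
    exact ⟨y, hy, hy0.trans_le (Nat.zero_le _)⟩
  push Not at hgR
  obtain ⟨v, hv, hv_eval, -⟩ := exists_mem_Lgeod f (g := eval f u * g)
    (by apply_rules [mul_mem, inv_mem, eval_mem_evalRange])
  obtain ⟨wg, hwg, hwg_eval, -⟩ := exists_mem_Lgeod f hgR
  obtain ⟨wh, hwh, hwh_eval, -⟩ := exists_mem_Lgeod f (g := (eval f v)⁻¹ * eval f wg)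
    (by apply_rules [mul_mem, inv_mem, eval_mem_evalRange])
  have hzx : wlen f ((eval f u')⁻¹ * eval f u) = u.length - u'.length := by
    obtain ⟨t, rfl⟩ := hu'
    simp [eval_append, (wlen_eval_of_append_mem_Lgeod f hu).2]
  obtain ⟨v', hv', hzp⟩ := hδ.exists_near_prefix_of_far_from_end hu hv hu'
    (by rw [hv_eval, inv_mul_cancel_left]; omega)
  have hp_len : u'.length ≤ v'.length + δ := by
    have := wlen_le_add_wlen_inv_mul f (eval_mem_evalRange f v') (eval f u')
    rw [wlen_eval_of_prefix f hu hu', wlen_eval_of_prefix f hv hv'] at this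
    omega
  obtain ⟨w', hw', hpq⟩ := hδ.exists_near_translate_prefix_of_far_from_start hv hwg hwh
    hwh_eval hv' (by rw [hwg_eval]; omega)
  obtain ⟨h, hh, hhk⟩ := hH wh hwh
    (by rw [hwh_eval, hv_eval, hwg_eval]; convert inv_mem hg using 1; group) w' hw'
  refine ⟨eval f u * g * h, ⟨g⁻¹ * eval f u * g * h, mul_mem hg hh, by group⟩, ?_⟩
  rw [hv_eval] at hpq
  set x := eval f u
  set z := eval f u'
  set p := eval f v'
  set q := eval f w'
  calc wlen f (z⁻¹ * (x * g * h))
      = wlen f ((z⁻¹ * p) * ((p⁻¹ * (x * g * q)) * (q⁻¹ * h))) := by group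
    _ ≤ wlen f (z⁻¹ * p) + (wlen f (p⁻¹ * (x * g * q)) + wlen f (q⁻¹ * h)) := by
        refine (wlen_mul_le f ?_ _).trans (Nat.add_le_add_left (wlen_mul_le f ?_ _) _) <;>
          apply_rules [mul_mem, inv_mem, eval_mem_evalRange]
    _ ≤ δ + (δ + k) := by
        rw [wlen_inv_mul_comm f q]
        omega
    _ = k + 2 * δ := by ring

lemma mem_conjG_inv_iff {H : Subgroup G} {g x : G} : x ∈ conjG H g⁻¹ ↔ g⁻¹ * x * g ∈ H := by
  simp only [conjG, Subgroup.mem_map, MulEquiv.coe_toMonoidHom, MulAut.conj_apply, inv_inv]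
  constructor
  · rintro ⟨y, hy, rfl⟩
    simpa [mul_assoc] using hy
  · exact fun h => ⟨_, h, by group⟩

lemma exists_near_of_not_mem_evalRange {ι : Type*} {H K : Subgroup G} {g : ι → G} {x : G}
    (hxK : x ∈ K) (hxH : ∀ i, (g i)⁻¹ * x * g i ∈ H) (hx : x ∉ evalRange f) (r : ℕ) :
    ∃ z : G, (∃ w ∈ K, wlen f (z⁻¹ * w) ≤ r) ∧
      ∀ i, ∃ w ∈ lcoset (g i) H, wlen f (z⁻¹ * w) ≤ r := by
  refine ⟨1, ⟨x, hxK, by simp [wlen_eq_zero_of_not_mem f hx]⟩, fun i => ?_⟩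
  by_cases hg : g i ∈ evalRange f
  · refine ⟨x * g i, ⟨(g i)⁻¹ * x * g i, hxH i, by group⟩, ?_⟩
    have hxg : x * g i ∉ evalRange f := fun h => hx (by simpa using mul_mem h (inv_mem hg))
    simp [wlen_eq_zero_of_not_mem f hxg]
  · obtain ⟨y, hy, hy0⟩ := exists_mem_lcoset_wlen_eq_zero (one_mem _) hg H
    exact ⟨y, hy, hy0.trans_le (Nat.zero_le r)⟩

end Hyperbolic

/-- if G is δ-hyperbolic then (G, L_geod) satisfies Property BP_ν for
ν(k) = k + 2δ: if H, K are quasi-convex with common constant k, and K, g₁H, …, g_nH are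
pairwise distinct with K ∩ g₁Hg₁⁻¹ ∩ … ∩ g_nHg_n⁻¹ infinite, then some z ∈ G lies at
word-metric distance at most k + 2δ from K and from each coset g_iH. -/
theorem stmt11 (f : A → G) (δ : ℕ) (hδ : Hyperbolic f δ) :
    BP f (Lgeod f) (fun k => k + 2 * δ) := by
  intro H K k hH hK n _ g _ hinf
  set C := Finset.univ.sup fun i => wlen f (g i)
  obtain ⟨x, hxI, hx⟩ : ∃ x ∈ ((K ⊓ ⨅ i, conjG H (g i)⁻¹ : Subgroup G) : Set G),
      x ∉ evalRange f ∨ 2 * (C + 2 * δ + 1) ≤ wlen f x := by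
    by_contra! hsmall
    exact hinf ((finite_setOf_mem_evalRange_wlen_le f _).subset
      fun x hx => ⟨(hsmall x hx).1, (hsmall x hx).2.le⟩)
  obtain ⟨hxK, hxH⟩ : x ∈ K ∧ ∀ i, (g i)⁻¹ * x * g i ∈ H := by
    simpa [Subgroup.mem_inf, Subgroup.mem_iInf, mem_conjG_inv_iff] using hxI
  by_cases hxR : x ∉ evalRange f
  · exact exists_near_of_not_mem_evalRange hxK hxH hxR _
  obtain ⟨u, hu, rfl, hu_len⟩ := exists_mem_Lgeod f (not_not.mp hxR)
  have h_long : 2 * (C + 2 * δ + 1) ≤ u.length := hu_len ▸ hx.resolve_left hxR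
  have hu' := List.take_prefix (C + 2 * δ + 1) u
  have h_mid : (u.take (C + 2 * δ + 1)).length = C + 2 * δ + 1 := by simp; omega
  refine ⟨eval f (u.take (C + 2 * δ + 1)), ?_, fun i => ?_⟩
  · obtain ⟨h, hhK, hh⟩ := hK u hu hxK _ hu'
    exact ⟨h, hhK, by rw [wlen_inv_mul_comm]; exact hh.trans (Nat.le_add_right k _)⟩
  · have hgi : wlen f (g i) ≤ C := Finset.le_sup (f := fun i => wlen f (g i)) (Finset.mem_univ i)
    exact hδ.exists_mem_lcoset_near hH hu hu' (hxH i) (by omega) (by omega)
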